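/- Let a ∈ ℝ^{2×2} be symmetric, invertible (rank 2), and not a real multiple of the identity matrix I₂. Define q(ξ) := 2‖aξ‖² − ⟨aξ, ξ⟩² for ξ ∈ ℝ², g := max_{ξ ∈ S¹} q(ξ), and S := {ξ ∈ S¹ : q(ξ) = g}. Then S is a nonempty proper closed subset of the unit circle S¹, and there exists a constant c > 0 such that g − q(ξ) ≥ c·dist(ξ, S)² for all ξ ∈ S¹. -/
import Mathlib

/-- The multiplier `q(ξ) = 2‖aξ‖² - ⟨aξ, ξ⟩²` for `ξ ∈ ℝ²`. -/
noncomputable def qcc (a : Matrix (Fin 2) (Fin 2) ℝ) (ξ : EuclideanSpace ℝ (Fin 2)) : ℝ :=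
  2 * (∑ i, (∑ j, a i j * ξ j) ^ 2) - (∑ i, ξ i * ∑ j, a i j * ξ j) ^ 2

namespace Stmt15Aux

abbrev E := EuclideanSpace ℝ (Fin 2)

noncomputable def mkE (x y : ℝ) : E := (WithLp.equiv 2 (Fin 2 → ℝ)).symm ![x, y]
@[simp] lemma mkE_zero (x y : ℝ) : mkE x y 0 = x := rfl
@[simp] lemma mkE_one (x y : ℝ) : mkE x y 1 = y := rfl

lemma norm_one_iff (ξ : E) : ‖ξ‖ = 1 ↔ (ξ 0)^2 + (ξ 1)^2 = 1 := by
  rw [EuclideanSpace.norm_eq, Fin.sum_univ_two, Real.sqrt_eq_one]; simp [sq_abs]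

lemma dist_sq (ξ η : E) : (dist ξ η)^2 = (ξ 0 - η 0)^2 + (ξ 1 - η 1)^2 := by
  rw [EuclideanSpace.dist_eq, Real.sq_sqrt]
  · simp [Fin.sum_univ_two, Real.dist_eq, sq_abs]
  · positivity

theorem exists_pq (v B : ℝ) : ∃ p q : ℝ, p^2+q^2 = 1 ∧ Real.sqrt (v^2+B^2) * (p^2 - q^2) = v ∧
    2 * Real.sqrt (v^2+B^2) * (p * q) = B := by
  set R := Real.sqrt (v^2+B^2) with hRdef
  have hR2 : R^2 = v^2+B^2 := Real.sq_sqrt (by positivity)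
  have hR0 : 0 ≤ R := Real.sqrt_nonneg _
  by_cases h : R - v = 0
  · refine ⟨1, 0, by ring, ?_, ?_⟩
    · have : R = v := by linarith
      simp [this]
    · have hB : B = 0 := by nlinarith
      simp [hB]
  · have hRv : 0 < R - v := by
      rcases lt_or_gt_of_ne h with h' | h'
      · exfalso; nlinarith
      · linarith
    have hRpos : 0 < R := by nlinarith
    have hden : 0 < 2*R*(R-v) := by positivity
    set s := Real.sqrt (2*R*(R-v)) with hsdef
    have hs : s^2 = 2*R*(R-v) := Real.sq_sqrt (le_of_lt hden)
    have hspos : 0 < s := Real.sqrt_pos.mpr hden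
    have hsne : s ≠ 0 := ne_of_gt hspos
    clear_value s
    have hB2 : B^2 = R^2 - v^2 := by linarith
    refine ⟨B / s, (R-v) / s, ?_, ?_, ?_⟩
    · field_simp
      linear_combination hB2 - hs
    · field_simp
      linear_combination R*hB2 - v*hs
    · field_simp
      linear_combination (-B)*hs

lemma sign_bound (t σ : ℝ) (hσ2 : σ^2 = 1) (hσ0 : 0 ≤ σ*t) (ht : t^2 ≤ 1) :
    t^2 ≤ σ*t := by
  nlinarith [hσ2, hσ0, ht, sq_nonneg (σ*t - 1), sq_nonneg (σ*t)]

lemma caseI_ub (u R x y : ℝ) (hR : 0 ≤ R) (huR : R < u) (hxy : x^2+y^2 = 1) :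
    2*u*(R*(x^2-y^2)) - (R*(x^2-y^2))^2 ≤ 2*u*R - R^2 := by
  have fid : (2*u*R - R^2) - (2*u*(R*(x^2-y^2)) - (R*(x^2-y^2))^2)
      = 4*R*(u-R)*y^2 + 4*R^2*y^4 := by
    linear_combination (R^2*((x^2+y^2)+1) - 2*u*R - 4*R^2*y^2) * hxy
  nlinarith [fid, mul_nonneg (mul_nonneg hR (show (0:ℝ) ≤ u-R by linarith)) (sq_nonneg y),
    sq_nonneg (R*y^2)]

lemma caseI_final (u R σ x y : ℝ) (hR : 0 ≤ R) (huR : R < u) (hxy : x^2+y^2 = 1)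
    (hσ : x^2 ≤ σ*x) :
    2*R*(u-R)*(2 - 2*(σ*x)) ≤ (2*u*R - R^2) - (2*u*(R*(x^2-y^2)) - (R*(x^2-y^2))^2) := by
  have fid : (2*u*R - R^2) - (2*u*(R*(x^2-y^2)) - (R*(x^2-y^2))^2)
      = 4*R*(u-R)*y^2 + 4*R^2*y^4 := by
    linear_combination (R^2*((x^2+y^2)+1) - 2*u*R - 4*R^2*y^2) * hxy
  have h1 : 0 ≤ 4*R*(u-R)*(σ*x - x^2) :=
    mul_nonneg (by nlinarith) (by linarith)
  have h4 : 4*R*(u-R)*(x^2+y^2-1) = 0 := by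
    rw [show x^2+y^2-1 = 0 from by linarith, mul_zero]
  have h5 : 0 ≤ 4*R^2*y^4 := by positivity
  linarith [fid, h1, h4, h5]

lemma caseIII_core (u R X Y x₀ y₀ : ℝ) (hR : 0 < R)
    (hxy : X^2+Y^2 = 1) (hx₀ : 2*R*x₀^2 = R+u) (hy₀ : 2*R*y₀^2 = R-u)
    (hx₀p : 0 < x₀) (hy₀p : 0 < y₀) (hxy₀ : x₀^2+y₀^2 = 1)
    (hX0 : 0 ≤ X) (hY0 : 0 ≤ Y) :
    R*(R-|u|)*((X - x₀)^2 + (Y - y₀)^2)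
      ≤ u^2 - (2*u*(R*(X^2-Y^2)) - (R*(X^2-Y^2))^2) := by
  have hTu : u - R*(X^2-Y^2) = 2*R*(x₀^2-X^2) := by linear_combination R*hxy - hx₀
  have fid : u^2 - (2*u*(R*(X^2-Y^2)) - (R*(X^2-Y^2))^2) = 4*R^2*(x₀^2-X^2)^2 := by
    linear_combination (u - R*(X^2-Y^2) + 2*R*(x₀^2-X^2))*hTu
  have hswap : x₀^2 - X^2 = Y^2 - y₀^2 := by linear_combination hxy₀ - hxy
  have h1 : x₀^2*(X-x₀)^2 ≤ (x₀^2-X^2)^2 := by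
    nlinarith [mul_nonneg (mul_nonneg hX0 hx₀p.le) (sq_nonneg (X-x₀)), sq_nonneg (X*(X-x₀))]
  have h2 : y₀^2*(Y-y₀)^2 ≤ (x₀^2-X^2)^2 := by
    have e : (x₀^2-X^2)^2 = (y₀^2-Y^2)^2 := by
      linear_combination (x₀^2-X^2-y₀^2+Y^2)*hswap
    rw [e]
    nlinarith [mul_nonneg (mul_nonneg hY0 hy₀p.le) (sq_nonneg (Y-y₀)), sq_nonneg (Y*(Y-y₀))]
  have h2Rx : 2*R^2*x₀^2 = R*(R+u) := by linear_combination R*hx₀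
  have h2Ry : 2*R^2*y₀^2 = R*(R-u) := by linear_combination R*hy₀
  have hca : R*(R-|u|) ≤ 2*R^2*x₀^2 := by
    have h := mul_nonneg hR.le (show (0:ℝ) ≤ u+|u| by linarith [neg_abs_le u])
    linarith [h2Rx]
  have hcb : R*(R-|u|) ≤ 2*R^2*y₀^2 := by
    have h := mul_nonneg hR.le (show (0:ℝ) ≤ |u|-u by linarith [le_abs_self u])
    linarith [h2Ry]
  have t1 : R*(R-|u|)*(X-x₀)^2 ≤ 2*R^2*x₀^2*(X-x₀)^2 :=
    mul_le_mul_of_nonneg_right hca (sq_nonneg _)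
  have t2 : R*(R-|u|)*(Y-y₀)^2 ≤ 2*R^2*y₀^2*(Y-y₀)^2 :=
    mul_le_mul_of_nonneg_right hcb (sq_nonneg _)
  have t3 : 2*R^2*x₀^2*(X-x₀)^2 ≤ 2*R^2*((x₀^2-X^2)^2) := by
    nlinarith [mul_le_mul_of_nonneg_left h1 (show (0:ℝ) ≤ 2*R^2 by positivity)]
  have t4 : 2*R^2*y₀^2*(Y-y₀)^2 ≤ 2*R^2*((x₀^2-X^2)^2) := by
    nlinarith [mul_le_mul_of_nonneg_left h2 (show (0:ℝ) ≤ 2*R^2 by positivity)]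
  linarith [fid, t1, t2, t3, t4]

lemma caseIII_final (u R σ τ x y x₀ y₀ : ℝ) (hR : 0 < R)
    (hxy : x^2+y^2 = 1) (hx₀ : 2*R*x₀^2 = R+u) (hy₀ : 2*R*y₀^2 = R-u)
    (hx₀p : 0 < x₀) (hy₀p : 0 < y₀) (hxy₀ : x₀^2+y₀^2 = 1)
    (hσ2 : σ^2 = 1) (hτ2 : τ^2 = 1) (hσ0 : 0 ≤ σ*x) (hτ0 : 0 ≤ τ*y) :
    R*(R-|u|)*((x - σ*x₀)^2 + (y - τ*y₀)^2)
      ≤ u^2 - (2*u*(R*(x^2-y^2)) - (R*(x^2-y^2))^2) := by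
  have hxy' : (σ*x)^2+(τ*y)^2 = 1 := by linear_combination x^2*hσ2 + y^2*hτ2 + hxy
  have core := caseIII_core u R (σ*x) (τ*y) x₀ y₀ hR hxy' hx₀ hy₀ hx₀p hy₀p hxy₀ hσ0 hτ0
  have eL : R*(R-|u|)*((σ*x - x₀)^2 + (τ*y - y₀)^2)
      = R*(R-|u|)*((x - σ*x₀)^2 + (y - τ*y₀)^2) := by
    linear_combination (R*(R-|u|)*(x^2-x₀^2))*hσ2 + (R*(R-|u|)*(y^2-y₀^2))*hτ2
  have eR : u^2 - (2*u*(R*((σ*x)^2-(τ*y)^2)) - (R*((σ*x)^2-(τ*y)^2))^2)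
      = u^2 - (2*u*(R*(x^2-y^2)) - (R*(x^2-y^2))^2) := by
    linear_combination ((R*((σ*x)^2-(τ*y)^2) + R*(x^2-y^2) - 2*u)*R*x^2)*hσ2
      - ((R*((σ*x)^2-(τ*y)^2) + R*(x^2-y^2) - 2*u)*R*y^2)*hτ2
  linarith [core, eL, eR]

lemma qcc_eq (a : Matrix (Fin 2) (Fin 2) ℝ) (hsym : a 1 0 = a 0 1) (ξ : E)
    (n1 : (ξ 0)^2 + (ξ 1)^2 = 1) :
    qcc a ξ = ((a 0 0)^2 + 2*(a 0 1)^2 + (a 1 1)^2 - ((a 0 0 + a 1 1)/2)^2)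
      + 2*((a 0 0 + a 1 1)/2) * ((a 0 0 - a 1 1)/2*((ξ 0)^2-(ξ 1)^2) + 2*(a 0 1)*(ξ 0)*(ξ 1))
      - ((a 0 0 - a 1 1)/2*((ξ 0)^2-(ξ 1)^2) + 2*(a 0 1)*(ξ 0)*(ξ 1))^2 := by
  simp only [qcc, Fin.sum_univ_two, hsym]
  linear_combination (((a 0 0)^2+2*(a 0 1)^2+(a 1 1)^2)
    - ((a 0 0 + a 1 1)/2)^2*(((ξ 0)^2+(ξ 1)^2)+1)
    - 2*((a 0 0 + a 1 1)/2)*((a 0 0 - a 1 1)/2*((ξ 0)^2-(ξ 1)^2) + 2*(a 0 1)*(ξ 0)*(ξ 1))) * n1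

theorem master (a : Matrix (Fin 2) (Fin 2) ℝ) (g c : ℝ) (hc : 0 < c)
    (hub : ∀ ξ : E, ‖ξ‖ = 1 → qcc a ξ ≤ g)
    (ξm : E) (hm1 : ‖ξm‖ = 1) (hm2 : qcc a ξm = g)
    (ξn : E) (hn1 : ‖ξn‖ = 1) (hn2 : qcc a ξn ≠ g)
    (hwit : ∀ ξ : E, ‖ξ‖ = 1 → ∃ η : E, (‖η‖ = 1 ∧ qcc a η = g) ∧
      c * dist ξ η ^ 2 ≤ g - qcc a ξ) :
    IsGreatest {y : ℝ | ∃ ξ : EuclideanSpace ℝ (Fin 2), ‖ξ‖ = 1 ∧ y = qcc a ξ} g ∧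
      {ξ : EuclideanSpace ℝ (Fin 2) | ‖ξ‖ = 1 ∧ qcc a ξ = g}.Nonempty ∧
      {ξ : EuclideanSpace ℝ (Fin 2) | ‖ξ‖ = 1 ∧ qcc a ξ = g} ≠
        Metric.sphere (0 : EuclideanSpace ℝ (Fin 2)) 1 ∧
      IsClosed {ξ : EuclideanSpace ℝ (Fin 2) | ‖ξ‖ = 1 ∧ qcc a ξ = g} ∧
      ∃ c : ℝ, 0 < c ∧ ∀ ξ : EuclideanSpace ℝ (Fin 2), ‖ξ‖ = 1 →
        c * (Metric.infDist ξ {η : EuclideanSpace ℝ (Fin 2) | ‖η‖ = 1 ∧ qcc a η = g}) ^ 2 ≤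
          g - qcc a ξ := by
  have hqcont : Continuous (qcc a) := by unfold qcc; fun_prop
  refine ⟨⟨⟨ξm, hm1, hm2.symm⟩, ?_⟩, ⟨ξm, hm1, hm2⟩, ?_, ?_, c, hc, ?_⟩
  · rintro y ⟨ξ, h1, rfl⟩
    exact hub ξ h1
  · intro hEq
    have hmem : ξn ∈ {ξ : E | ‖ξ‖ = 1 ∧ qcc a ξ = g} := by
      rw [hEq]
      simpa using hn1
    exact hn2 hmem.2
  · rw [Set.setOf_and]
    exact (isClosed_eq continuous_norm continuous_const).inter
      (isClosed_eq hqcont continuous_const)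
  · intro ξ hξ
    obtain ⟨η, hη, hle⟩ := hwit ξ hξ
    have h1 : Metric.infDist ξ {η : E | ‖η‖ = 1 ∧ qcc a η = g} ≤ dist ξ η :=
      Metric.infDist_le_dist_of_mem hη
    have h2 : (Metric.infDist ξ {η : E | ‖η‖ = 1 ∧ qcc a η = g})^2 ≤ dist ξ η ^ 2 :=
      pow_le_pow_left₀ Metric.infDist_nonneg h1 2
    calc c * (Metric.infDist ξ {η : E | ‖η‖ = 1 ∧ qcc a η = g})^2
        ≤ c * dist ξ η ^ 2 := mul_le_mul_of_nonneg_left h2 hc.le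
      _ ≤ g - qcc a ξ := hle

end Stmt15Aux

set_option maxHeartbeats 2000000 in
open Stmt15Aux in
/-- For a symmetric invertible `2×2` matrix `a` that is not a multiple of the identity, the
set `S` of maximizers of `q` on the unit circle is a nonempty proper closed subset and
`g - q(ξ) ≥ c·dist(ξ,S)²` on the unit circle: the maximal vanishing order is one. -/
theorem statement15 (a : Matrix (Fin 2) (Fin 2) ℝ) (ha : a.IsSymm)
    (hrank : a.det ≠ 0) (hnotid : ∀ c : ℝ, a ≠ c • (1 : Matrix (Fin 2) (Fin 2) ℝ)) :
    ∃ g : ℝ,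
      IsGreatest {y : ℝ | ∃ ξ : EuclideanSpace ℝ (Fin 2), ‖ξ‖ = 1 ∧ y = qcc a ξ} g ∧
      {ξ : EuclideanSpace ℝ (Fin 2) | ‖ξ‖ = 1 ∧ qcc a ξ = g}.Nonempty ∧
      {ξ : EuclideanSpace ℝ (Fin 2) | ‖ξ‖ = 1 ∧ qcc a ξ = g} ≠
        Metric.sphere (0 : EuclideanSpace ℝ (Fin 2)) 1 ∧
      IsClosed {ξ : EuclideanSpace ℝ (Fin 2) | ‖ξ‖ = 1 ∧ qcc a ξ = g} ∧
      ∃ c : ℝ, 0 < c ∧ ∀ ξ : EuclideanSpace ℝ (Fin 2), ‖ξ‖ = 1 →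
        c * (Metric.infDist ξ {η : EuclideanSpace ℝ (Fin 2) | ‖η‖ = 1 ∧ qcc a η = g}) ^ 2 ≤
          g - qcc a ξ := by
  classical
  have hsym : a 1 0 = a 0 1 := ha.apply 0 1
  obtain ⟨A, hA⟩ : ∃ x : ℝ, x = a 0 0 := ⟨_, rfl⟩
  obtain ⟨B, hB⟩ : ∃ x : ℝ, x = a 0 1 := ⟨_, rfl⟩
  obtain ⟨D, hD⟩ : ∃ x : ℝ, x = a 1 1 := ⟨_, rfl⟩
  obtain ⟨u, hu⟩ : ∃ x : ℝ, x = (A + D)/2 := ⟨_, rfl⟩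
  obtain ⟨v, hv⟩ : ∃ x : ℝ, x = (A - D)/2 := ⟨_, rfl⟩
  obtain ⟨K, hK⟩ : ∃ x : ℝ, x = A^2 + 2*B^2 + D^2 - u^2 := ⟨_, rfl⟩
  obtain ⟨R, hR⟩ : ∃ x : ℝ, x = Real.sqrt (v^2 + B^2) := ⟨_, rfl⟩
  have hR2 : R^2 = v^2 + B^2 := by rw [hR]; exact Real.sq_sqrt (by positivity)
  have hRnn : 0 ≤ R := hR ▸ Real.sqrt_nonneg _
  have hq : ∀ ξ : E, (ξ 0)^2 + (ξ 1)^2 = 1 →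
      qcc a ξ = K + 2*u*(v*((ξ 0)^2 - (ξ 1)^2) + 2*B*(ξ 0)*(ξ 1))
        - (v*((ξ 0)^2 - (ξ 1)^2) + 2*B*(ξ 0)*(ξ 1))^2 := by
    intro ξ hn
    have h := qcc_eq a hsym ξ hn
    rw [← hA, ← hB, ← hD] at h
    rw [h, hK, hu, hv]
    try ring
  have hVB : ¬ (v = 0 ∧ B = 0) := by
    rintro ⟨hv0, hB0⟩
    apply hnotid A
    have hDA : a 1 1 = a 0 0 := by
      rw [← hA, ← hD]; rw [hv] at hv0; linarith
    have hB0' : a 0 1 = 0 := by rw [← hB]; exact hB0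
    ext i j
    fin_cases i <;> fin_cases j <;>
      simp [Matrix.smul_apply, Matrix.one_apply, hB0', hsym, hDA, ← hA]
  have hRpos : 0 < R := by
    have h2 : 0 < v^2 + B^2 := by
      rcases not_and_or.mp hVB with h | h <;> positivity
    rcases lt_or_eq_of_le hRnn with h | h
    · exact h
    · exfalso; rw [← h] at hR2; norm_num at hR2; linarith
  have hdet : u^2 ≠ R^2 := by
    intro hE
    apply hrank
    rw [Matrix.det_fin_two, hsym, ← hA, ← hB, ← hD]
    linear_combination hE + hR2 - (u+(A+D)/2)*hu + (v+(A-D)/2)*hv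
  obtain ⟨p, q, hpq, hvR, hBR⟩ : ∃ p q : ℝ, p^2+q^2 = 1 ∧ R*(p^2-q^2) = v ∧ 2*R*(p*q) = B := by
    obtain ⟨p, q, h1, h2, h3⟩ := exists_pq v B
    exact ⟨p, q, h1, by rw [hR]; exact h2, by rw [hR]; exact h3⟩
  have hEplus : v*(p^2 - q^2) + 2*B*(p*q) = R := by
    linear_combination (-(p^2-q^2))*hvR + (-2*(p*q))*hBR + R*(p^2+q^2+1)*hpq
  have hEcross : 2*B*(p^2-q^2) - 4*v*(p*q) = 0 := by
    linear_combination 4*(p*q)*hvR - 2*(p^2-q^2)*hBR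
  have hHe : ∀ ξ : E, v*((ξ 0)^2 - (ξ 1)^2) + 2*B*(ξ 0)*(ξ 1)
      = R*((p*ξ 0 + q*ξ 1)^2 - (p*ξ 1 - q*ξ 0)^2) := by
    intro ξ
    linear_combination ((ξ 1)^2 - (ξ 0)^2)*hvR - 2*(ξ 0)*(ξ 1)*hBR
  have hxyξ : ∀ ξ : E, (ξ 0)^2 + (ξ 1)^2 = 1 →
      (p*ξ 0 + q*ξ 1)^2 + (p*ξ 1 - q*ξ 0)^2 = 1 := by
    intro ξ hn
    linear_combination ((ξ 0)^2+(ξ 1)^2)*hpq + hn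
  have hsign : ∀ t : ℝ, ∃ σ : ℝ, σ^2 = 1 ∧ 0 ≤ σ*t := by
    intro t
    rcases le_or_gt 0 t with h | h
    exacts [⟨1, by ring, by linarith⟩, ⟨-1, by ring, by linarith⟩]
  rcases lt_trichotomy (u^2) (R^2) with hlt | heq | hgt
  · -- interior case: det < 0
    have habs : |u| < R := by
      refine lt_of_pow_lt_pow_left₀ 2 hRnn ?_
      rw [sq_abs]; exact hlt
    have hu_ltR : u < R := lt_of_le_of_lt (le_abs_self u) habs
    have hu_gtR : -R < u := (abs_lt.mp habs).1
    obtain ⟨x₀, hx₀d⟩ : ∃ t : ℝ, t = Real.sqrt ((R+u)/(2*R)) := ⟨_, rfl⟩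
    obtain ⟨y₀, hy₀d⟩ : ∃ t : ℝ, t = Real.sqrt ((R-u)/(2*R)) := ⟨_, rfl⟩
    have hx₀sq : x₀^2 = (R+u)/(2*R) := by
      rw [hx₀d]; exact Real.sq_sqrt (by apply div_nonneg <;> linarith)
    have hy₀sq : y₀^2 = (R-u)/(2*R) := by
      rw [hy₀d]; exact Real.sq_sqrt (by apply div_nonneg <;> linarith)
    have hx₀ : 2*R*x₀^2 = R+u := by rw [hx₀sq]; field_simp
    have hy₀ : 2*R*y₀^2 = R-u := by rw [hy₀sq]; field_simp
    have hx₀p : 0 < x₀ := by rw [hx₀d]; exact Real.sqrt_pos.mpr (by apply div_pos <;> linarith)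
    have hy₀p : 0 < y₀ := by rw [hy₀d]; exact Real.sqrt_pos.mpr (by apply div_pos <;> linarith)
    have hxy₀ : x₀^2 + y₀^2 = 1 := by
      have h2 : 2*R*(x₀^2+y₀^2) = 2*R*1 := by linarith
      exact mul_left_cancel₀ (by positivity) h2
    refine ⟨K + u^2, master a _ (R*(R-|u|)) (mul_pos hRpos (by linarith)) ?_
      (mkE (p*x₀ - q*y₀) (q*x₀ + p*y₀)) ?_ ?_ (mkE p q) ?_ ?_ ?_⟩
    · intro ξ hξ
      have hn := (norm_one_iff ξ).1 hξ
      rw [hq ξ hn]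
      linarith [sq_nonneg (u - (v*((ξ 0)^2 - (ξ 1)^2) + 2*B*(ξ 0)*(ξ 1)))]
    · rw [norm_one_iff]; simp only [mkE_zero, mkE_one]
      linear_combination (x₀^2+y₀^2)*hpq + hxy₀
    · have hn : ((mkE (p*x₀ - q*y₀) (q*x₀ + p*y₀)) 0)^2 + ((mkE (p*x₀ - q*y₀) (q*x₀ + p*y₀)) 1)^2 = 1 := by
        simp only [mkE_zero, mkE_one]
        linear_combination (x₀^2+y₀^2)*hpq + hxy₀
      rw [hq _ hn]; simp only [mkE_zero, mkE_one]
      have hval : v*((p*x₀ - q*y₀)^2 - (q*x₀ + p*y₀)^2) + 2*B*(p*x₀ - q*y₀)*(q*x₀ + p*y₀) = u := by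
        linear_combination (x₀^2-y₀^2)*hEplus + (x₀*y₀)*hEcross + (1/2)*hx₀ - (1/2)*hy₀
      rw [hval]; try ring
    · rw [norm_one_iff]; simp only [mkE_zero, mkE_one]; exact hpq
    · have hn : ((mkE p q) 0)^2 + ((mkE p q) 1)^2 = 1 := by
        simp only [mkE_zero, mkE_one]; exact hpq
      rw [hq _ hn]; simp only [mkE_zero, mkE_one]
      have hval : v*(p^2 - q^2) + 2*B*p*q = R := by linear_combination hEplus
      rw [hval]
      intro hcontra
      have hne : u - R ≠ 0 := by intro h; linarith [sub_eq_zero.mp h]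
      have hpos2 : 0 < (u-R)^2 := pow_two_pos_of_ne_zero hne
      have h9 : (u-R)^2 = 0 := by linear_combination -hcontra
      linarith
    · intro ξ hξ
      have hn := (norm_one_iff ξ).1 hξ
      have hxy1 := hxyξ ξ hn
      obtain ⟨σ, hσ2, hσ0⟩ := hsign (p*ξ 0 + q*ξ 1)
      obtain ⟨τ, hτ2, hτ0⟩ := hsign (p*ξ 1 - q*ξ 0)
      refine ⟨mkE (p*(σ*x₀) - q*(τ*y₀)) (q*(σ*x₀) + p*(τ*y₀)), ⟨?_, ?_⟩, ?_⟩
      · rw [norm_one_iff]; simp only [mkE_zero, mkE_one]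
        linear_combination (σ^2*x₀^2 + τ^2*y₀^2)*hpq + x₀^2*hσ2 + y₀^2*hτ2 + hxy₀
      · have hn2 : ((mkE (p*(σ*x₀) - q*(τ*y₀)) (q*(σ*x₀) + p*(τ*y₀))) 0)^2
            + ((mkE (p*(σ*x₀) - q*(τ*y₀)) (q*(σ*x₀) + p*(τ*y₀))) 1)^2 = 1 := by
          simp only [mkE_zero, mkE_one]
          linear_combination (σ^2*x₀^2 + τ^2*y₀^2)*hpq + x₀^2*hσ2 + y₀^2*hτ2 + hxy₀
        rw [hq _ hn2]; simp only [mkE_zero, mkE_one]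
        have hval : v*((p*(σ*x₀) - q*(τ*y₀))^2 - (q*(σ*x₀) + p*(τ*y₀))^2)
            + 2*B*(p*(σ*x₀) - q*(τ*y₀))*(q*(σ*x₀) + p*(τ*y₀)) = u := by
          linear_combination (σ^2*x₀^2 - τ^2*y₀^2)*hEplus + (σ*τ*x₀*y₀)*hEcross
            + R*x₀^2*hσ2 - R*y₀^2*hτ2 + (1/2)*hx₀ - (1/2)*hy₀
        rw [hval]; try ring
      · rw [dist_sq]; simp only [mkE_zero, mkE_one]
        rw [hq ξ hn, hHe ξ]
        have hd : (ξ 0 - (p*(σ*x₀) - q*(τ*y₀)))^2 + (ξ 1 - (q*(σ*x₀) + p*(τ*y₀)))^2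
            = ((p*ξ 0 + q*ξ 1) - σ*x₀)^2 + ((p*ξ 1 - q*ξ 0) - τ*y₀)^2 := by
          linear_combination (σ^2*x₀^2 + τ^2*y₀^2 - (ξ 0)^2 - (ξ 1)^2)*hpq
        rw [hd]
        have := caseIII_final u R σ τ (p*ξ 0 + q*ξ 1) (p*ξ 1 - q*ξ 0) x₀ y₀ hRpos
          hxy1 hx₀ hy₀ hx₀p hy₀p hxy₀ hσ2 hτ2 hσ0 hτ0
        linarith
  · exact absurd heq hdet
  · -- endpoint case: det > 0
    have hu0 : u ≠ 0 := by
      intro h; rw [h] at hgt; norm_num at hgt; linarith [sq_nonneg R]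
    rcases lt_or_gt_of_ne hu0 with hneg | hpos
    · -- u < 0
      have huR : R < -u := by
        refine lt_of_pow_lt_pow_left₀ 2 (by linarith) ?_
        calc R^2 < u^2 := hgt
          _ = (-u)^2 := by ring
      refine ⟨K - 2*u*R - R^2, master a _ (2*R*(-u-R)) (mul_pos (by linarith) (by linarith)) ?_
        (mkE (-q) p) ?_ ?_ (mkE p q) ?_ ?_ ?_⟩
      · intro ξ hξ
        have hn := (norm_one_iff ξ).1 hξ
        rw [hq ξ hn, hHe ξ]
        have := caseI_ub (-u) R (p*ξ 1 - q*ξ 0) (p*ξ 0 + q*ξ 1) hRnn huR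
          (by linarith [hxyξ ξ hn])
        linarith
      · rw [norm_one_iff]; simp only [mkE_zero, mkE_one]
        linear_combination hpq
      · have hn : ((mkE (-q) p) 0)^2 + ((mkE (-q) p) 1)^2 = 1 := by
          simp only [mkE_zero, mkE_one]; linear_combination hpq
        rw [hq _ hn]; simp only [mkE_zero, mkE_one]
        have hval : v*((-q)^2 - p^2) + 2*B*(-q)*p = -R := by linear_combination (-1)*hEplus
        rw [hval]; try ring
      · rw [norm_one_iff]; simp only [mkE_zero, mkE_one]; exact hpq
      · have hn : ((mkE p q) 0)^2 + ((mkE p q) 1)^2 = 1 := by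
          simp only [mkE_zero, mkE_one]; exact hpq
        rw [hq _ hn]; simp only [mkE_zero, mkE_one]
        have hval : v*(p^2 - q^2) + 2*B*p*q = R := by linear_combination hEplus
        rw [hval]
        intro hcontra
        have : u*R < 0 := mul_neg_of_neg_of_pos hneg hRpos
        have h9 : 4*(u*R) = 0 := by linear_combination hcontra
        linarith
      · intro ξ hξ
        have hn := (norm_one_iff ξ).1 hξ
        have hxy1 := hxyξ ξ hn
        obtain ⟨σ, hσ2, hσ0⟩ := hsign (p*ξ 1 - q*ξ 0)
        have hσ : (p*ξ 1 - q*ξ 0)^2 ≤ σ*(p*ξ 1 - q*ξ 0) :=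
          sign_bound _ _ hσ2 hσ0 (by linarith [sq_nonneg (p*ξ 0 + q*ξ 1)])
        refine ⟨mkE (-(σ*q)) (σ*p), ⟨?_, ?_⟩, ?_⟩
        · rw [norm_one_iff]; simp only [mkE_zero, mkE_one]
          linear_combination (p^2+q^2)*hσ2 + hpq
        · have hn2 : ((mkE (-(σ*q)) (σ*p)) 0)^2 + ((mkE (-(σ*q)) (σ*p)) 1)^2 = 1 := by
            simp only [mkE_zero, mkE_one]; linear_combination (p^2+q^2)*hσ2 + hpq
          rw [hq _ hn2]; simp only [mkE_zero, mkE_one]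
          have hval : v*((-(σ*q))^2 - (σ*p)^2) + 2*B*(-(σ*q))*(σ*p) = -R := by
            linear_combination (-(v*(p^2 - q^2) + 2*B*(p*q)))*hσ2 - hEplus
          rw [hval]; try ring
        · rw [dist_sq]; simp only [mkE_zero, mkE_one]
          rw [hq ξ hn, hHe ξ]
          have hd : (ξ 0 - (-(σ*q)))^2 + (ξ 1 - σ*p)^2
              = 2 - 2*(σ*(p*ξ 1 - q*ξ 0)) := by
            linear_combination hn + (p^2+q^2)*hσ2 + hpq
          rw [hd]
          have := caseI_final (-u) R σ (p*ξ 1 - q*ξ 0) (p*ξ 0 + q*ξ 1) hRnn huR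
            (by linarith [hxy1]) hσ
          linarith
    · -- u > 0
      have huR : R < u := lt_of_pow_lt_pow_left₀ 2 hpos.le hgt
      refine ⟨K + 2*u*R - R^2, master a _ (2*R*(u-R)) (mul_pos (by linarith) (by linarith)) ?_
        (mkE p q) ?_ ?_ (mkE (-q) p) ?_ ?_ ?_⟩
      · intro ξ hξ
        have hn := (norm_one_iff ξ).1 hξ
        rw [hq ξ hn, hHe ξ]
        have := caseI_ub u R (p*ξ 0 + q*ξ 1) (p*ξ 1 - q*ξ 0) hRnn huR (hxyξ ξ hn)
        linarith
      · rw [norm_one_iff]; simp only [mkE_zero, mkE_one]; exact hpq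
      · have hn : ((mkE p q) 0)^2 + ((mkE p q) 1)^2 = 1 := by
          simp only [mkE_zero, mkE_one]; exact hpq
        rw [hq _ hn]; simp only [mkE_zero, mkE_one]
        have hval : v*(p^2 - q^2) + 2*B*p*q = R := by linear_combination hEplus
        rw [hval]; try ring
      · rw [norm_one_iff]; simp only [mkE_zero, mkE_one]
        linear_combination hpq
      · have hn : ((mkE (-q) p) 0)^2 + ((mkE (-q) p) 1)^2 = 1 := by
          simp only [mkE_zero, mkE_one]; linear_combination hpq
        rw [hq _ hn]; simp only [mkE_zero, mkE_one]
        have hval : v*((-q)^2 - p^2) + 2*B*(-q)*p = -R := by linear_combination (-1)*hEplus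
        rw [hval]
        intro hcontra
        have : 0 < u*R := mul_pos hpos hRpos
        have h9 : 4*(u*R) = 0 := by linear_combination -hcontra
        linarith
      · intro ξ hξ
        have hn := (norm_one_iff ξ).1 hξ
        have hxy1 := hxyξ ξ hn
        obtain ⟨σ, hσ2, hσ0⟩ := hsign (p*ξ 0 + q*ξ 1)
        have hσ : (p*ξ 0 + q*ξ 1)^2 ≤ σ*(p*ξ 0 + q*ξ 1) :=
          sign_bound _ _ hσ2 hσ0 (by linarith [sq_nonneg (p*ξ 1 - q*ξ 0)])
        refine ⟨mkE (σ*p) (σ*q), ⟨?_, ?_⟩, ?_⟩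
        · rw [norm_one_iff]; simp only [mkE_zero, mkE_one]
          linear_combination (p^2+q^2)*hσ2 + hpq
        · have hn2 : ((mkE (σ*p) (σ*q)) 0)^2 + ((mkE (σ*p) (σ*q)) 1)^2 = 1 := by
            simp only [mkE_zero, mkE_one]; linear_combination (p^2+q^2)*hσ2 + hpq
          rw [hq _ hn2]; simp only [mkE_zero, mkE_one]
          have hval : v*((σ*p)^2 - (σ*q)^2) + 2*B*(σ*p)*(σ*q) = R := by
            linear_combination (v*(p^2 - q^2) + 2*B*(p*q))*hσ2 + hEplus
          rw [hval]; try ring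
        · rw [dist_sq]; simp only [mkE_zero, mkE_one]
          rw [hq ξ hn, hHe ξ]
          have hd : (ξ 0 - σ*p)^2 + (ξ 1 - σ*q)^2
              = 2 - 2*(σ*(p*ξ 0 + q*ξ 1)) := by
            linear_combination hn + (p^2+q^2)*hσ2 + hpq
          rw [hd]
          have := caseI_final u R σ (p*ξ 0 + q*ξ 1) (p*ξ 1 - q*ξ 0) hRnn huR hxy1 hσ
          linarith
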